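/- arXiv:1801.09021 — 7 statements merged into one kernel-verified Lean document; each statement's English description precedes it below -/
import Mathlib

section
/- For any categorical distribution θ on a finite nonempty set X and any real α ≠ 1, the Shannon entropy of the tilted distribution, the Rényi entropy, and the relative entropy satisfy: H(T(θ,α)) − H_α(θ) = (α/(1−α))·D(T(θ,α)||θ). -/
open Real BigOperators
open scoped Classical

variable {X : Type*}

/-- A categorical distribution on a finite set: positive everywhere and sums to 1. -/
def IsCatDist [Fintype X] (θ : X → ℝ) : Prop :=
  (∀ x, 0 < θ x) ∧ ∑ x, θ x = 1

/-- The tilt of order `α` of a categorical distribution. -/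
noncomputable def tilt [Fintype X] (θ : X → ℝ) (α : ℝ) : X → ℝ :=
  fun x => θ x ^ α / ∑ y, θ y ^ α

/-- Shannon entropy (natural log). -/
noncomputable def shannonEntropy [Fintype X] (ρ : X → ℝ) : ℝ :=
  ∑ x, ρ x * Real.log (1 / ρ x)

/-- Cross entropy `H(ρ‖θ)`. -/
noncomputable def crossEntropy [Fintype X] (ρ θ : X → ℝ) : ℝ :=
  ∑ x, ρ x * Real.log (1 / θ x)

/-- Relative entropy (KL divergence) `D(ρ‖θ)`. -/
noncomputable def relEntropy [Fintype X] (ρ θ : X → ℝ) : ℝ :=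
  ∑ x, ρ x * Real.log (ρ x / θ x)

/-- Rényi entropy of order `α`. -/
noncomputable def renyiEntropy [Fintype X] (θ : X → ℝ) (α : ℝ) : ℝ :=
  (1 / (1 - α)) * Real.log (∑ x, θ x ^ α)

/-- Varentropy. -/
noncomputable def varentropy [Fintype X] (ρ : X → ℝ) : ℝ :=
  ∑ x, ρ x * (Real.log (1 / ρ x) - shannonEntropy ρ) ^ 2

/-- Cross varentropy. -/
noncomputable def crossVarentropy [Fintype X] (ρ θ : X → ℝ) : ℝ :=
  ∑ x, ρ x * (Real.log (1 / θ x) - crossEntropy ρ θ) ^ 2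

/-- Probability of an `n`-string under the i.i.d. extension of `θ`. -/
noncomputable def strProb (θ : X → ℝ) {n : ℕ} (x : Fin n → X) : ℝ := ∏ i, θ (x i)

/-- Probability of a set of `n`-strings. -/
noncomputable def setProb [Fintype X] (θ : X → ℝ) {n : ℕ} (S : Finset (Fin n → X)) : ℝ :=
  ∑ x ∈ S, strProb θ x

/-- `θ` has a unique maximizer and a unique minimizer. -/
def UniqueExtremizers [Fintype X] (θ : X → ℝ) : Prop :=
  (∃! x : X, ∀ y, θ y ≤ θ x) ∧ (∃! x : X, ∀ y, θ x ≤ θ y)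

/-- Tilted weakly typical set of order `α`. -/
noncomputable def typicalSetA [Fintype X] (θ : X → ℝ) (α : ℝ) (n : ℕ) (ε : ℝ) :
    Finset (Fin n → X) :=
  Finset.univ.filter (fun x =>
    Real.exp (-(n : ℝ) * crossEntropy (tilt θ α) θ - n * ε) < strProb θ x ∧
    strProb θ x < Real.exp (-(n : ℝ) * crossEntropy (tilt θ α) θ + n * ε))

/-- The set `D^n_{θ,α,ε}`. -/
noncomputable def setD [Fintype X] (θ : X → ℝ) (α : ℝ) (n : ℕ) (ε : ℝ) :
    Finset (Fin n → X) :=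
  Finset.univ.filter (fun x =>
    strProb (tilt θ α) x > Real.exp (-(n : ℝ) * shannonEntropy (tilt θ α) - n * |α| * ε))

/-- The set `E^n_{θ,α,ε}`. -/
noncomputable def setE [Fintype X] (θ : X → ℝ) (α : ℝ) (n : ℕ) (ε : ℝ) :
    Finset (Fin n → X) :=
  Finset.univ.filter (fun x =>
    strProb (tilt θ α) x < Real.exp (-(n : ℝ) * shannonEntropy (tilt θ α) + n * |α| * ε))

/-- A guesswork function for `θ` on `n`-strings: a bijection onto `{1,…,|X|^n}`
that orders strings from most likely to least likely. -/
def IsGuesswork [Fintype X] (θ : X → ℝ) {n : ℕ} (G : (Fin n → X) → ℕ) : Prop :=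
  Function.Injective G ∧
  (∀ x, G x ∈ Finset.Icc 1 (Fintype.card X ^ n)) ∧
  (∀ m ∈ Finset.Icc 1 (Fintype.card X ^ n), ∃ x, G x = m) ∧
  (∀ x y, strProb θ x > strProb θ y → G x < G y)

theorem shannonEntropy_tilt_sub_renyiEntropy [Fintype X] [Nonempty X] (θ : X → ℝ)
    (hθ : IsCatDist θ) (α : ℝ) (hα : α ≠ 1) :
    shannonEntropy (tilt θ α) - renyiEntropy θ α =
      (α / (1 - α)) * relEntropy (tilt θ α) θ := by
  obtain ⟨hpos, hsum⟩ := hθ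
  have h1α : (1:ℝ) - α ≠ 0 := sub_ne_zero.mpr (Ne.symm hα)
  set S := ∑ x, θ x ^ α with hS
  have hSpos : 0 < S := Finset.sum_pos (fun x _ => Real.rpow_pos_of_pos (hpos x) α)
    Finset.univ_nonempty
  have htpos : ∀ x, 0 < tilt θ α x := fun x =>
    div_pos (Real.rpow_pos_of_pos (hpos x) α) hSpos
  have htsum : ∑ x, tilt θ α x = 1 := by
    simp only [tilt, ← hS]
    rw [← Finset.sum_div, ← hS, div_self hSpos.ne']
  have hlog : ∀ x, Real.log (tilt θ α x) = α * Real.log (θ x) - Real.log S := by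
    intro x
    rw [tilt, Real.log_div (Real.rpow_pos_of_pos (hpos x) α).ne' hSpos.ne',
      Real.log_rpow (hpos x)]
  have key : ∀ x ∈ (Finset.univ : Finset X),
      tilt θ α x * Real.log (1 / tilt θ α x)
        - (α / (1 - α)) * (tilt θ α x * Real.log (tilt θ α x / θ x))
        - (1 / (1 - α)) * (tilt θ α x * Real.log S) = 0 := by
    intro x _
    rw [one_div, Real.log_inv, Real.log_div (htpos x).ne' (hpos x).ne', hlog x]
    field_simp
    ring
  have hzero : (∑ x, (tilt θ α x * Real.log (1 / tilt θ α x)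
        - (α / (1 - α)) * (tilt θ α x * Real.log (tilt θ α x / θ x))
        - (1 / (1 - α)) * (tilt θ α x * Real.log S))) = 0 :=
    Finset.sum_eq_zero key
  have hexp : (∑ x, (tilt θ α x * Real.log (1 / tilt θ α x)
        - (α / (1 - α)) * (tilt θ α x * Real.log (tilt θ α x / θ x))
        - (1 / (1 - α)) * (tilt θ α x * Real.log S)))
      = shannonEntropy (tilt θ α) - (α / (1 - α)) * relEntropy (tilt θ α) θ
        - (1 / (1 - α)) * Real.log S := by
    rw [Finset.sum_sub_distrib, Finset.sum_sub_distrib, ← Finset.mul_sum, ← Finset.mul_sum]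
    have : (∑ x, tilt θ α x * Real.log S) = Real.log S := by
      rw [← Finset.sum_mul, htsum, one_mul]
    rw [this]
    rfl
  have : shannonEntropy (tilt θ α) - (α / (1 - α)) * relEntropy (tilt θ α) θ
      - (1 / (1 - α)) * Real.log S = 0 := by rw [← hexp, hzero]
  have hren : renyiEntropy θ α = (1 / (1 - α)) * Real.log S := rfl
  rw [hren]
  linarith
end

section
/- For any categorical distribution θ on a finite nonempty set X, any x ∈ X, and any α₀ ∈ ℝ, the function α ↦ T(θ,α)(x) is differentiable at α₀ with derivative T(θ,α₀)(x)·( H(T(θ,α₀)||θ) − log(1/θ(x)) ). -/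
open Real BigOperators
open scoped Classical

variable {X : Type*}

/-! The tilt is the quotient `θ x ^ α / Z α` with `Z α = ∑ y, θ y ^ α`, and `d/dα θ ^ α = θ ^ α log θ`;
by the quotient rule the derivative is `T(θ,α)(x) · (log θ x - Z' α / Z α)`, and `-Z' α / Z α` is
the mean of `log (1 / θ)` under the tilt, i.e. the cross entropy. -/

lemma crossEntropy_tilt [Fintype X] (θ : X → ℝ) (α : ℝ) :
    crossEntropy (tilt θ α) θ = -(∑ y, θ y ^ α * Real.log (θ y)) / ∑ y, θ y ^ α := by
  simp only [crossEntropy, tilt, one_div, Real.log_inv, neg_div, Finset.sum_div,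
    ← Finset.sum_neg_distrib]
  exact Finset.sum_congr rfl fun y _ => by ring

section PositiveWeights

variable [Fintype X] {θ : X → ℝ}

lemma sum_rpow_pos (hθ : ∀ y, 0 < θ y) (x : X) (α : ℝ) : 0 < ∑ y, θ y ^ α :=
  (rpow_pos_of_pos (hθ x) α).trans_le <|
    Finset.single_le_sum (fun y _ => (rpow_pos_of_pos (hθ y) α).le) (Finset.mem_univ x)

lemma hasDerivAt_sum_rpow (hθ : ∀ y, 0 < θ y) (α₀ : ℝ) :
    HasDerivAt (fun α => ∑ y, θ y ^ α) (∑ y, θ y ^ α₀ * Real.log (θ y)) α₀ :=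
  HasDerivAt.fun_sum fun y _ => (hasStrictDerivAt_const_rpow (hθ y) α₀).hasDerivAt

end PositiveWeights

theorem hasDerivAt_tilt_general [Fintype X] (θ : X → ℝ) (hθ : IsCatDist θ)
    (x : X) (α₀ : ℝ) :
    HasDerivAt (fun α : ℝ => tilt θ α x)
      (tilt θ α₀ x * (crossEntropy (tilt θ α₀) θ - Real.log (1 / θ x))) α₀ := by
  have hZ := sum_rpow_pos hθ.1 x α₀
  have hquot := (hasStrictDerivAt_const_rpow (hθ.1 x) α₀).hasDerivAt.div
    (hasDerivAt_sum_rpow hθ.1 α₀) hZ.ne'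
  refine hquot.congr_deriv ?_
  rw [crossEntropy_tilt, tilt, one_div, Real.log_inv]
  field_simp
  ring

theorem hasDerivAt_tilt [Fintype X] [Nonempty X] (θ : X → ℝ) (hθ : IsCatDist θ)
    (x : X) (α₀ : ℝ) :
    HasDerivAt (fun α : ℝ => tilt θ α x)
      (tilt θ α₀ x * (crossEntropy (tilt θ α₀) θ - Real.log (1 / θ x))) α₀ :=
  hasDerivAt_tilt_general θ hθ x α₀
end

section
/- For any categorical distribution θ on a finite nonempty set X and any α₀ ∈ ℝ, the function α ↦ D(T(θ,α)||θ) is differentiable at α₀ with derivative (α₀−1)·V(T(θ,α₀)||θ). -/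
open Real BigOperators
open scoped Classical

variable {X : Type*}

/-!
Write `Z(α) = ∑ θ(x)^α`. Then `D(T(θ,α)‖θ) = (1 - α) H(T(θ,α)‖θ) - log Z(α)`, the logarithmic
derivative of `Z` is `-H(T(θ,α)‖θ)`, and differentiating the tilt shows
`d/dα H(T(θ,α)‖θ) = -V(T(θ,α)‖θ)`; the two cross-entropy terms cancel in the product rule.
-/

lemma crossVarentropy_eq_sum_sub_sq [Fintype X] (ρ θ : X → ℝ) (hρ : ∑ x, ρ x = 1) :
    crossVarentropy ρ θ = ∑ x, ρ x * log (1 / θ x) ^ 2 - crossEntropy ρ θ ^ 2 := by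
  unfold crossVarentropy
  set H := crossEntropy ρ θ with hH
  have hterm : ∀ x, ρ x * (log (1 / θ x) - H) ^ 2
      = ρ x * log (1 / θ x) ^ 2 - 2 * H * (ρ x * log (1 / θ x)) + H ^ 2 * ρ x := by
    intro x; ring
  rw [Finset.sum_congr rfl fun x _ => hterm x, Finset.sum_add_distrib, Finset.sum_sub_distrib,
    ← Finset.mul_sum, ← Finset.mul_sum, hρ, ← crossEntropy, ← hH]
  ring

namespace Tilt

variable [Fintype X] {θ : X → ℝ}

lemma sum_rpow_pos [Nonempty X] (hθ : ∀ x, 0 < θ x) (α : ℝ) : 0 < ∑ x, θ x ^ α :=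
  Finset.sum_pos (fun x _ => rpow_pos_of_pos (hθ x) α) Finset.univ_nonempty

lemma sum_tilt [Nonempty X] (hθ : ∀ x, 0 < θ x) (α : ℝ) : ∑ x, tilt θ α x = 1 := by
  simp only [tilt, ← Finset.sum_div, div_self (sum_rpow_pos hθ α).ne']

lemma crossEntropy_tilt (α : ℝ) :
    crossEntropy (tilt θ α) θ = -(∑ x, θ x ^ α * log (θ x)) / ∑ x, θ x ^ α := by
  simp only [crossEntropy, tilt, one_div, log_inv, Finset.sum_div, ← Finset.sum_neg_distrib]
  exact Finset.sum_congr rfl fun x _ => by ring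

lemma relEntropy_tilt [Nonempty X] (hθ : ∀ x, 0 < θ x) (α : ℝ) :
    relEntropy (tilt θ α) θ
      = (1 - α) * crossEntropy (tilt θ α) θ - log (∑ x, θ x ^ α) := by
  set Z := ∑ x, θ x ^ α
  have hZ : 0 < Z := sum_rpow_pos hθ α
  have hterm : ∀ x, tilt θ α x * log (tilt θ α x / θ x)
      = (1 - α) * (tilt θ α x * log (1 / θ x)) - tilt θ α x * log Z := by
    intro x
    have hθα : 0 < θ x ^ α := rpow_pos_of_pos (hθ x) α
    rw [tilt, log_div (div_pos hθα hZ).ne' (hθ x).ne', log_div hθα.ne' hZ.ne',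
      log_rpow (hθ x), one_div, log_inv]
    ring
  rw [relEntropy, Finset.sum_congr rfl fun x _ => hterm x, Finset.sum_sub_distrib,
    ← Finset.mul_sum, ← Finset.sum_mul, sum_tilt hθ, one_mul, crossEntropy]

lemma hasDerivAt_sum_rpow (hθ : ∀ x, 0 < θ x) (α : ℝ) :
    HasDerivAt (fun a => ∑ x, θ x ^ a) (∑ x, θ x ^ α * log (θ x)) α :=
  HasDerivAt.fun_sum fun x _ => (hasStrictDerivAt_const_rpow (hθ x) α).hasDerivAt

lemma hasDerivAt_log_sum_rpow [Nonempty X] (hθ : ∀ x, 0 < θ x) (α : ℝ) :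
    HasDerivAt (fun a => log (∑ x, θ x ^ a)) (-crossEntropy (tilt θ α) θ) α := by
  rw [crossEntropy_tilt, neg_div, neg_neg]
  exact (hasDerivAt_sum_rpow hθ α).log (sum_rpow_pos hθ α).ne'

lemma hasDerivAt_tilt [Nonempty X] (hθ : ∀ x, 0 < θ x) (α : ℝ) (x : X) :
    HasDerivAt (fun a => tilt θ a x)
      (tilt θ α x * (log (θ x) + crossEntropy (tilt θ α) θ)) α := by
  have hZ := (sum_rpow_pos hθ α).ne'
  refine ((hasStrictDerivAt_const_rpow (hθ x) α).hasDerivAt.div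
    (hasDerivAt_sum_rpow hθ α) hZ).congr_deriv ?_
  rw [crossEntropy_tilt]
  simp only [tilt]
  field_simp
  ring

lemma hasDerivAt_crossEntropy_tilt [Nonempty X] (hθ : ∀ x, 0 < θ x) (α : ℝ) :
    HasDerivAt (fun a => crossEntropy (tilt θ a) θ) (-crossVarentropy (tilt θ α) θ) α := by
  set H := crossEntropy (tilt θ α) θ
  have hderiv := HasDerivAt.fun_sum fun x (_ : x ∈ Finset.univ) =>
    (hasDerivAt_tilt hθ α x).mul_const (log (1 / θ x))
  refine hderiv.congr_deriv ?_
  have hterm : ∀ x, tilt θ α x * (log (θ x) + H) * log (1 / θ x)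
      = H * (tilt θ α x * log (1 / θ x)) - tilt θ α x * log (1 / θ x) ^ 2 := by
    intro x; rw [one_div, log_inv]; ring
  rw [crossVarentropy_eq_sum_sub_sq _ _ (sum_tilt hθ α), Finset.sum_congr rfl fun x _ => hterm x,
    Finset.sum_sub_distrib, ← Finset.mul_sum, ← crossEntropy]
  ring

end Tilt

open Tilt in
theorem hasDerivAt_relEntropy_tilt [Fintype X] [Nonempty X] (θ : X → ℝ)
    (hθ : IsCatDist θ) (α₀ : ℝ) :
    HasDerivAt (fun α : ℝ => relEntropy (tilt θ α) θ)
      ((α₀ - 1) * crossVarentropy (tilt θ α₀) θ) α₀ := by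
  have hpos := hθ.1
  simp only [relEntropy_tilt hpos]
  refine ((((hasDerivAt_id' α₀).const_sub 1).fun_mul
    (hasDerivAt_crossEntropy_tilt hpos α₀)).fun_sub
    (hasDerivAt_log_sum_rpow hpos α₀)).congr_deriv ?_
  ring
end

section
/- Let θ be a categorical distribution on a finite nonempty set X. If θ has a unique maximizer (i.e., exactly one x ∈ X with θ(x) = max_{y∈X} θ(y)), then H(T(θ,α)) tends to 0 as α → +∞; if θ has a unique minimizer, then H(T(θ,α)) tends to 0 as α → −∞. -/
open Real BigOperators
open scoped Classical

variable {X : Type*}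

/-!
Normalising by the largest weight, `tilt θ α x = (θ x / θ x₀) ^ α / ∑ y, (θ y / θ x₀) ^ α`. When `x₀`
is the unique maximiser every ratio other than `θ x₀ / θ x₀ = 1` lies in `(0, 1)`, so its `α`-th power
vanishes as `α → ∞`; hence the tilt converges to the point mass at `x₀`, whose entropy is `0`, and
entropy is continuous. The case `α → -∞` is the same with the unique minimiser.
-/

open Filter Topology

lemma lt_of_ne_of_existsUnique_max {β : Type*} [LinearOrder β] {f : X → β} {x₀ y : X}
    (hmax : ∀ y, f y ≤ f x₀) (huniq : ∀ x, (∀ y, f y ≤ f x) → x = x₀) (hy : y ≠ x₀) :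
    f y < f x₀ :=
  (hmax y).lt_of_ne fun heq => hy (huniq y fun z => heq ▸ hmax z)

section Entropy

variable [Fintype X]

lemma shannonEntropy_eq_sum_negMulLog (ρ : X → ℝ) :
    shannonEntropy ρ = ∑ x, negMulLog (ρ x) := by
  refine Finset.sum_congr rfl fun x _ => ?_
  rw [one_div, log_inv, negMulLog]
  ring

lemma continuous_shannonEntropy : Continuous (shannonEntropy : (X → ℝ) → ℝ) := by
  simp_rw [funext shannonEntropy_eq_sum_negMulLog]
  fun_prop

lemma shannonEntropy_pi_single (x₀ : X) : shannonEntropy (Pi.single x₀ 1 : X → ℝ) = 0 := by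
  rw [shannonEntropy_eq_sum_negMulLog]
  refine Finset.sum_eq_zero fun x _ => ?_
  rcases eq_or_ne x x₀ with rfl | hx
  · simp
  · simp [hx]

lemma tilt_eq_div_sum_rpow_div {θ : X → ℝ} (hθ : ∀ x, 0 < θ x) (x₀ x : X) (α : ℝ) :
    tilt θ α x = (θ x / θ x₀) ^ α / ∑ y, (θ y / θ x₀) ^ α := by
  have hx₀ : θ x₀ ^ α ≠ 0 := (rpow_pos_of_pos (hθ x₀) α).ne'
  simp only [tilt, div_rpow (hθ _).le (hθ x₀).le, ← Finset.sum_div]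
  rw [div_div_div_cancel_right₀ hx₀]

lemma tendsto_tilt_pi_single {θ : X → ℝ} (hθ : ∀ x, 0 < θ x) {x₀ : X} {l : Filter ℝ}
    (h : ∀ y ≠ x₀, Tendsto (fun α : ℝ => (θ y / θ x₀) ^ α) l (𝓝 0)) :
    Tendsto (tilt θ) l (𝓝 (Pi.single x₀ 1)) := by
  have hratio :
      ∀ y, Tendsto (fun α : ℝ => (θ y / θ x₀) ^ α) l (𝓝 ((Pi.single x₀ 1 : X → ℝ) y)) := by
    intro y
    rcases eq_or_ne y x₀ with rfl | hy
    · simpa [div_self (hθ y).ne'] using tendsto_const_nhds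
    · simpa [hy] using h y hy
  have hsum : Tendsto (fun α : ℝ => ∑ y, (θ y / θ x₀) ^ α) l (𝓝 1) := by
    simpa using tendsto_finsetSum Finset.univ fun y _ => hratio y
  refine tendsto_pi_nhds.2 fun x => ?_
  simpa [tilt_eq_div_sum_rpow_div hθ x₀, Pi.div_def] using (hratio x).div hsum one_ne_zero

lemma tendsto_shannonEntropy_tilt {θ : X → ℝ} (hθ : ∀ x, 0 < θ x) {x₀ : X} {l : Filter ℝ}
    (h : ∀ y ≠ x₀, Tendsto (fun α : ℝ => (θ y / θ x₀) ^ α) l (𝓝 0)) :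
    Tendsto (fun α => shannonEntropy (tilt θ α)) l (𝓝 0) := by
  have := (continuous_shannonEntropy.tendsto _).comp (tendsto_tilt_pi_single hθ h)
  rwa [shannonEntropy_pi_single] at this

end Entropy

theorem entropy_tilt_tendsto_zero_general [Fintype X] (θ : X → ℝ)
    (hθ : IsCatDist θ) :
    ((∃! x : X, ∀ y, θ y ≤ θ x) →
      Filter.Tendsto (fun α : ℝ => shannonEntropy (tilt θ α)) Filter.atTop (nhds 0)) ∧
    ((∃! x : X, ∀ y, θ x ≤ θ y) →
      Filter.Tendsto (fun α : ℝ => shannonEntropy (tilt θ α)) Filter.atBot (nhds 0)) := by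
  obtain ⟨hpos, -⟩ := hθ
  constructor
  · rintro ⟨x₀, hmax, huniq⟩
    refine tendsto_shannonEntropy_tilt hpos (x₀ := x₀) fun y hy => ?_
    have hlt : θ y < θ x₀ := lt_of_ne_of_existsUnique_max hmax huniq hy
    exact tendsto_rpow_atTop_of_base_lt_one _
      (by linarith [div_pos (hpos y) (hpos x₀)]) ((div_lt_one (hpos x₀)).2 hlt)
  · rintro ⟨x₀, hmin, huniq⟩
    refine tendsto_shannonEntropy_tilt hpos (x₀ := x₀) fun y hy => ?_
    have hlt : θ x₀ < θ y := lt_of_ne_of_existsUnique_max (β := ℝᵒᵈ) hmin huniq hy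
    exact tendsto_rpow_atBot_of_base_gt_one _ ((one_lt_div (hpos x₀)).2 hlt)

theorem entropy_tilt_tendsto_zero [Fintype X] [Nonempty X] (θ : X → ℝ)
    (hθ : IsCatDist θ) :
    ((∃! x : X, ∀ y, θ y ≤ θ x) →
      Filter.Tendsto (fun α : ℝ => shannonEntropy (tilt θ α)) Filter.atTop (nhds 0)) ∧
    ((∃! x : X, ∀ y, θ x ≤ θ y) →
      Filter.Tendsto (fun α : ℝ => shannonEntropy (tilt θ α)) Filter.atBot (nhds 0)) :=
  entropy_tilt_tendsto_zero_general θ hθ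
end

section
/- Let X be a finite set with |X| ≥ 2, and let θ and ρ be categorical distributions on X, each having unique extremizers. Suppose θ and ρ are order equivalent, i.e., for every n ∈ ℕ and all n-strings xⁿ, yⁿ ∈ Xⁿ one has θⁿ(xⁿ) > θⁿ(yⁿ) if and only if ρⁿ(xⁿ) > ρⁿ(yⁿ). Then there exists a unique α > 0 such that ρ(x) = T(θ,α)(x) for all x ∈ X. -/
open Real BigOperators
open scoped Classical

variable {X : Type*}

lemma strProb_pair (θ : X → ℝ) (s t : X) (p q : ℕ) :
    strProb θ (fun i : Fin (p+q) => if (i:ℕ) < p then s else t) = θ s ^ p * θ t ^ q := by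
  unfold strProb
  rw [Fin.prod_univ_add]
  simp

theorem order_equivalent_iff_tilt [Fintype X] (hcard : 2 ≤ Fintype.card X)
    (θ ρ : X → ℝ) (hθ : IsCatDist θ) (hρ : IsCatDist ρ)
    (hθe : UniqueExtremizers θ) (hρe : UniqueExtremizers ρ)
    (horder : ∀ n : ℕ, ∀ x y : Fin n → X,
      strProb θ x > strProb θ y ↔ strProb ρ x > strProb ρ y) :
    ∃! α : ℝ, 0 < α ∧ ∀ x, ρ x = tilt θ α x := by
  obtain ⟨⟨a, ha, hauniq⟩, ⟨b, hb, hbuniq⟩⟩ := hθe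
  have hθpos := hθ.1
  have hρpos := hρ.1
  have h1 : ∀ x y : X, θ x > θ y ↔ ρ x > ρ y := by
    intro x y
    have := horder 1 (fun _ => x) (fun _ => y)
    simpa [strProb] using this
  have hab : a ≠ b := by
    intro h
    obtain ⟨c, hc⟩ := Fintype.exists_ne_of_one_lt_card (by omega) a
    apply hc
    apply hauniq
    intro y
    calc θ y ≤ θ a := ha y
    _ = θ b := by rw [h]
    _ ≤ θ c := hb c
  have hθab : θ b < θ a := by
    refine lt_of_le_of_ne (hb a) (fun h => hab ?_)
    exact (hauniq b (fun y => h ▸ ha y)).symm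
  have hρab : ρ b < ρ a := (h1 a b).mp hθab
  set u : X → ℝ := fun x => Real.log (θ x) with hu
  set v : X → ℝ := fun x => Real.log (ρ x) with hv
  set A : ℝ := u a - u b with hA
  set B : ℝ := v a - v b with hB
  have hApos : 0 < A := sub_pos.2 (Real.log_lt_log (hθpos b) hθab)
  have hBpos : 0 < B := sub_pos.2 (Real.log_lt_log (hρpos b) hρab)
  have key : ∀ (s : X) (p q : ℕ),
      θ a ^ p * θ b ^ q < θ b ^ p * θ s ^ q ↔ ρ a ^ p * ρ b ^ q < ρ b ^ p * ρ s ^ q := by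
    intro s p q
    have := horder (p+q) (fun i => if (i:ℕ) < p then b else s) (fun i => if (i:ℕ) < p then a else b)
    rwa [strProb_pair, strProb_pair, strProb_pair, strProb_pair] at this
  have hlogθ : ∀ (s t : X) (p q : ℕ),
      Real.log (θ s ^ p * θ t ^ q) = p * u s + q * u t := by
    intro s t p q
    rw [Real.log_mul (pow_ne_zero _ (hθpos s).ne') (pow_ne_zero _ (hθpos t).ne'),
      Real.log_pow, Real.log_pow]
  have hlogρ : ∀ (s t : X) (p q : ℕ),
      Real.log (ρ s ^ p * ρ t ^ q) = p * v s + q * v t := by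
    intro s t p q
    rw [Real.log_mul (pow_ne_zero _ (hρpos s).ne') (pow_ne_zero _ (hρpos t).ne'),
      Real.log_pow, Real.log_pow]
  have key2 : ∀ (s : X) (p q : ℕ),
      (p : ℝ) * A < q * (u s - u b) ↔ (p : ℝ) * B < q * (v s - v b) := by
    intro s p q
    have h := key s p q
    have hθiff : (p:ℝ) * u a + (q:ℝ) * u b < (p:ℝ) * u b + (q:ℝ) * u s ↔
        θ a ^ p * θ b ^ q < θ b ^ p * θ s ^ q := by
      rw [← hlogθ a b p q, ← hlogθ b s p q]
      exact Real.log_lt_log_iff (mul_pos (pow_pos (hθpos a) p) (pow_pos (hθpos b) q))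
        (mul_pos (pow_pos (hθpos b) p) (pow_pos (hθpos s) q))
    have hρiff : (p:ℝ) * v a + (q:ℝ) * v b < (p:ℝ) * v b + (q:ℝ) * v s ↔
        ρ a ^ p * ρ b ^ q < ρ b ^ p * ρ s ^ q := by
      rw [← hlogρ a b p q, ← hlogρ b s p q]
      exact Real.log_lt_log_iff (mul_pos (pow_pos (hρpos a) p) (pow_pos (hρpos b) q))
        (mul_pos (pow_pos (hρpos b) p) (pow_pos (hρpos s) q))
    constructor
    · intro h'
      have h2 := h.1 (hθiff.1 (by simp only [hA] at h'; linarith))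
      have h3 := hρiff.2 h2
      simp only [hB]; linarith
    · intro h'
      have h2 := h.2 (hρiff.1 (by simp only [hB] at h'; linarith))
      have h3 := hθiff.2 h2
      simp only [hA]; linarith
  have hub : ∀ x, u b ≤ u x := fun x => Real.log_le_log (hθpos b) (hb x)
  have hρmin : ∀ x, ρ b ≤ ρ x := fun x => not_lt.1 (fun h => (not_lt.2 (hb x)) ((h1 b x).2 h))
  have hvb : ∀ x, v b ≤ v x := fun x => Real.log_le_log (hρpos b) (hρmin x)
  have hratio : ∀ x, (u x - u b) / A = (v x - v b) / B := by
    intro x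
    set r : ℝ := (u x - u b) / A with hr
    set s : ℝ := (v x - v b) / B with hs
    have hr0 : 0 ≤ r := div_nonneg (by linarith [hub x]) hApos.le
    have hs0 : 0 ≤ s := div_nonneg (by linarith [hvb x]) hBpos.le
    have cmp : ∀ (c : ℚ), 0 < c → ((c:ℝ) < r ↔ (c:ℝ) < s) := by
      intro c hcq
      have hq : (0:ℝ) < (c.den : ℝ) := by exact_mod_cast c.den_pos
      have hcast : ((c.num.toNat : ℝ)) / (c.den : ℝ) = (c : ℝ) := by
        rw [Rat.cast_def]
        congr 1
        exact_mod_cast Int.toNat_of_nonneg (le_of_lt (Rat.num_pos.2 hcq))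
      have h2 := key2 x c.num.toNat c.den
      rw [hr, hs, ← hcast, div_lt_div_iff₀ hq hApos, div_lt_div_iff₀ hq hBpos]
      constructor
      · intro h'; have := h2.1 (by linarith); linarith
      · intro h'; have := h2.2 (by linarith); linarith
    by_contra hne
    rcases lt_or_gt_of_ne hne with hlt | hlt
    · obtain ⟨c, hc1, hc2⟩ := exists_rat_btwn hlt
      have hcq : (0:ℚ) < c := by exact_mod_cast lt_of_le_of_lt hr0 hc1
      exact absurd ((cmp c hcq).2 hc2) (not_lt.2 hc1.le)
    · obtain ⟨c, hc1, hc2⟩ := exists_rat_btwn hlt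
      have hcq : (0:ℚ) < c := by exact_mod_cast lt_of_le_of_lt hs0 hc1
      exact absurd ((cmp c hcq).1 hc2) (not_lt.2 hc1.le)
  -- define α
  set α : ℝ := B / A with hαdef
  have hαpos : 0 < α := div_pos hBpos hApos
  have hlin : ∀ x, v x = (v b - α * u b) + α * u x := by
    intro x
    have hrx := hratio x
    rw [div_eq_div_iff hApos.ne' hBpos.ne'] at hrx
    have h2 : α * (u x - u b) = v x - v b := by
      rw [hαdef, div_mul_eq_mul_div, div_eq_iff hApos.ne']
      linear_combination hrx
    linarith
  set C : ℝ := Real.exp (v b - α * u b) with hC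
  have hrep : ∀ x, ρ x = C * θ x ^ α := by
    intro x
    have h1' : ρ x = Real.exp (v x) := (Real.exp_log (hρpos x)).symm
    rw [h1', hlin x, Real.exp_add, hC, Real.rpow_def_of_pos (hθpos x), mul_comm (Real.log (θ x)) α]
  haveI : Nonempty X := Fintype.card_pos_iff.mp (by omega)
  set S : ℝ := ∑ y, θ y ^ α with hS
  have hSpos : 0 < S := by
    rw [hS]
    exact Finset.sum_pos (fun y _ => Real.rpow_pos_of_pos (hθpos y) α) Finset.univ_nonempty
  have hCS : C * S = 1 := by
    have h0 : ∑ y, ρ y = ∑ y, C * θ y ^ α := Finset.sum_congr rfl (fun y _ => hrep y)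
    rw [hρ.2, ← Finset.mul_sum] at h0
    rw [hS]
    linarith
  have htilt : ∀ x, ρ x = tilt θ α x := by
    intro x
    rw [hrep x, tilt, ← hS]
    rw [eq_div_iff hSpos.ne', mul_right_comm, hCS, one_mul]
  refine ⟨α, ⟨hαpos, htilt⟩, ?_⟩
  rintro β ⟨hβpos, hβ⟩
  have hga : ∀ γ : ℝ, Real.log (tilt θ γ a) - Real.log (tilt θ γ b) = γ * A := by
    intro γ
    have hSg : 0 < ∑ y, θ y ^ γ :=
      Finset.sum_pos (fun y _ => Real.rpow_pos_of_pos (hθpos y) γ) Finset.univ_nonempty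
    rw [tilt, tilt]
    rw [Real.log_div (Real.rpow_pos_of_pos (hθpos a) γ).ne' hSg.ne',
        Real.log_div (Real.rpow_pos_of_pos (hθpos b) γ).ne' hSg.ne',
        Real.log_rpow (hθpos a), Real.log_rpow (hθpos b)]
    simp only [hA]
    ring
  have e1 : Real.log (ρ a) - Real.log (ρ b) = β * A := by rw [hβ a, hβ b]; exact hga β
  have e2 : Real.log (ρ a) - Real.log (ρ b) = α * A := by rw [htilt a, htilt b]; exact hga α
  have : β * A = α * A := by rw [← e1, e2]
  exact mul_right_cancel₀ hApos.ne' this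
end

section
/- Let θ be a categorical distribution on a finite nonempty set X, let n ≥ 1 and ε > 0, and let A := { xⁿ ∈ Xⁿ : exp(−n·H(θ) − n·ε) < θⁿ(xⁿ) < exp(−n·H(θ) + n·ε) } be the weakly typical set. Then: (i) P_θ(A) ≥ 1 − V(θ)/(n·ε²); (ii) the cardinality of A satisfies |A| ≥ (1 − V(θ)/(n·ε²))·exp(n·H(θ) − n·ε); and (iii) |A| < exp(n·H(θ) + n·ε). -/
open Real BigOperators
open scoped Classical

variable {X : Type*}

lemma iid_zero' [Fintype X] (θ : X → ℝ) (h1 : ∑ x, θ x = 1) (n : ℕ) :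
    ∑ x : Fin n → X, ∏ i, θ (x i) = 1 := by
  induction n with
  | zero => simp
  | succ n ih =>
    rw [← Equiv.sum_comp (Fin.consEquiv fun _ => X) (fun x => ∏ i, θ (x i)),
      Fintype.sum_prod_type]
    simp only [Fin.consEquiv_apply, Fin.prod_univ_succ, Fin.cons_zero, Fin.cons_succ]
    rw [← Finset.sum_mul_sum, ih, h1]
    simp

lemma iid_first' [Fintype X] (θ : X → ℝ) (h1 : ∑ x, θ x = 1) (F : X → ℝ)
    (h0 : ∑ y, θ y * F y = 0) (n : ℕ) :
    ∑ x : Fin n → X, (∏ i, θ (x i)) * (∑ i, F (x i)) = 0 := by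
  induction n with
  | zero => simp
  | succ n ih =>
    rw [← Equiv.sum_comp (Fin.consEquiv fun _ => X)
      (fun x => (∏ i, θ (x i)) * (∑ i, F (x i))), Fintype.sum_prod_type]
    simp only [Fin.consEquiv_apply, Fin.prod_univ_succ, Fin.sum_univ_succ,
      Fin.cons_zero, Fin.cons_succ]
    have key : ∀ y : X, ∑ t : Fin n → X,
        (θ y * ∏ i, θ (t i)) * (F y + ∑ i, F (t i)) = θ y * F y := by
      intro y
      have h2 : ∀ t : Fin n → X, (θ y * ∏ i, θ (t i)) * (F y + ∑ i, F (t i))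
          = (θ y * F y) * (∏ i, θ (t i)) + θ y * ((∏ i, θ (t i)) * (∑ i, F (t i))) :=
        fun t => by ring
      rw [Finset.sum_congr rfl fun t _ => h2 t, Finset.sum_add_distrib,
        ← Finset.mul_sum, ← Finset.mul_sum, iid_zero' θ h1 n, ih]
      ring
    rw [Finset.sum_congr rfl fun y _ => key y, h0]

lemma iid_second' [Fintype X] (θ : X → ℝ) (h1 : ∑ x, θ x = 1) (F : X → ℝ)
    (h0 : ∑ y, θ y * F y = 0) (n : ℕ) :
    ∑ x : Fin n → X, (∏ i, θ (x i)) * (∑ i, F (x i)) ^ 2 = n * (∑ y, θ y * F y ^ 2) := by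
  induction n with
  | zero => simp
  | succ n ih =>
    rw [← Equiv.sum_comp (Fin.consEquiv fun _ => X)
      (fun x => (∏ i, θ (x i)) * (∑ i, F (x i)) ^ 2), Fintype.sum_prod_type]
    simp only [Fin.consEquiv_apply, Fin.prod_univ_succ, Fin.sum_univ_succ,
      Fin.cons_zero, Fin.cons_succ]
    have key : ∀ y : X, ∑ t : Fin n → X,
        (θ y * ∏ i, θ (t i)) * (F y + ∑ i, F (t i)) ^ 2
        = θ y * F y ^ 2 + θ y * (n * (∑ z, θ z * F z ^ 2)) := by
      intro y
      have h2 : ∀ t : Fin n → X, (θ y * ∏ i, θ (t i)) * (F y + ∑ i, F (t i)) ^ 2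
          = (θ y * F y ^ 2) * (∏ i, θ (t i))
            + (2 * θ y * F y) * ((∏ i, θ (t i)) * (∑ i, F (t i)))
            + θ y * ((∏ i, θ (t i)) * (∑ i, F (t i)) ^ 2) := fun t => by ring
      rw [Finset.sum_congr rfl fun t _ => h2 t, Finset.sum_add_distrib,
        Finset.sum_add_distrib, ← Finset.mul_sum, ← Finset.mul_sum, ← Finset.mul_sum,
        iid_zero' θ h1 n, iid_first' θ h1 F h0 n, ih]
      ring
    rw [Finset.sum_congr rfl fun y _ => key y, Finset.sum_add_distrib,
      ← Finset.sum_mul, h1]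
    push_cast
    ring

theorem weakly_typical_set_bounds [Fintype X] [Nonempty X] (θ : X → ℝ)
    (hθ : IsCatDist θ) (n : ℕ) (hn : 1 ≤ n) (ε : ℝ) (hε : 0 < ε)
    (A : Finset (Fin n → X))
    (hA : A = Finset.univ.filter (fun x =>
      Real.exp (-(n : ℝ) * shannonEntropy θ - n * ε) < strProb θ x ∧
      strProb θ x < Real.exp (-(n : ℝ) * shannonEntropy θ + n * ε))) :
    1 - varentropy θ / (n * ε ^ 2) ≤ setProb θ A ∧
    (1 - varentropy θ / (n * ε ^ 2)) * Real.exp ((n : ℝ) * shannonEntropy θ - n * ε) ≤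
      (A.card : ℝ) ∧
    (A.card : ℝ) < Real.exp ((n : ℝ) * shannonEntropy θ + n * ε) := by
  obtain ⟨hpos, h1⟩ := hθ
  set H := shannonEntropy θ with hH
  set V := varentropy θ with hVdef
  set F : X → ℝ := fun y => Real.log (1 / θ y) - H with hF
  have npos : (0 : ℝ) < n := by exact_mod_cast Nat.lt_of_lt_of_le Nat.zero_lt_one hn
  have h0 : ∑ y, θ y * F y = 0 := by
    simp only [hF, mul_sub]
    rw [Finset.sum_sub_distrib, ← Finset.sum_mul, h1]
    simp [hH, shannonEntropy]
  have hVsum : ∑ y, θ y * F y ^ 2 = V := rfl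
  -- strProb as an exponential
  have hstr : ∀ x : Fin n → X, strProb θ x = Real.exp (-(n : ℝ) * H - ∑ i, F (x i)) := by
    intro x
    have h2 : ∀ i : Fin n, θ (x i) = Real.exp (-(F (x i) + H)) := by
      intro i
      show θ (x i) = Real.exp (-((Real.log (1 / θ (x i)) - H) + H))
      rw [one_div, Real.log_inv,
        show -(-Real.log (θ (x i)) - H + H) = Real.log (θ (x i)) by ring,
        Real.exp_log (hpos _)]
    rw [strProb, Finset.prod_congr rfl fun i _ => h2 i, ← Real.exp_sum]
    congr 1
    rw [Finset.sum_neg_distrib, Finset.sum_add_distrib, Finset.sum_const,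
      Finset.card_univ, Fintype.card_fin, nsmul_eq_mul]
    ring
  -- membership rephrased
  have hAeq : A = Finset.univ.filter (fun x => |∑ i, F (x i)| < n * ε) := by
    rw [hA]
    apply Finset.filter_congr
    intro x _
    rw [hstr x, Real.exp_lt_exp, Real.exp_lt_exp, abs_lt]
    constructor
    · rintro ⟨ha, hb⟩; constructor <;> linarith
    · rintro ⟨ha, hb⟩; constructor <;> linarith
  have hPpos : ∀ x : Fin n → X, 0 < strProb θ x :=
    fun x => Finset.prod_pos fun i _ => hpos _
  have htot : ∑ x : Fin n → X, strProb θ x = 1 := iid_zero' θ h1 n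
  set Bc := Finset.univ.filter (fun x : Fin n → X => ¬ |∑ i, F (x i)| < n * ε) with hBc
  have hsplit : setProb θ A + ∑ x ∈ Bc, strProb θ x = 1 := by
    rw [hAeq, setProb, hBc, Finset.sum_filter_add_sum_filter_not]
    exact htot
  -- Chebyshev
  have hV : ∑ x : Fin n → X, strProb θ x * (∑ i, F (x i)) ^ 2 = n * V := by
    rw [← hVsum]
    exact iid_second' θ h1 F h0 n
  have hcheb : (n * ε) ^ 2 * (∑ x ∈ Bc, strProb θ x) ≤ n * V := by
    rw [← hV, Finset.mul_sum]
    calc ∑ x ∈ Bc, (n * ε) ^ 2 * strProb θ x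
        ≤ ∑ x ∈ Bc, strProb θ x * (∑ i, F (x i)) ^ 2 := by
          apply Finset.sum_le_sum
          intro x hx
          have hx' : n * ε ≤ |∑ i, F (x i)| :=
            le_of_not_gt (Finset.mem_filter.mp hx).2
          have h2 : (n * ε) ^ 2 ≤ (∑ i, F (x i)) ^ 2 := by
            calc (n * ε) ^ 2 ≤ |∑ i, F (x i)| ^ 2 := pow_le_pow_left₀ (by positivity) hx' 2
              _ = (∑ i, F (x i)) ^ 2 := sq_abs _
          rw [mul_comm]
          exact mul_le_mul_of_nonneg_left h2 (le_of_lt (hPpos x))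
      _ ≤ ∑ x : Fin n → X, strProb θ x * (∑ i, F (x i)) ^ 2 := by
          apply Finset.sum_le_sum_of_subset_of_nonneg (Finset.filter_subset _ _)
          intro x _ _
          exact mul_nonneg (hPpos x).le (sq_nonneg _)
  have part1 : 1 - V / (n * ε ^ 2) ≤ setProb θ A := by
    have hB : ∑ x ∈ Bc, strProb θ x ≤ V / (n * ε ^ 2) := by
      rw [le_div_iff₀ (by positivity)]
      nlinarith [hcheb]
    linarith
  refine ⟨part1, ?_, ?_⟩
  · -- cardinality lower bound
    have hcard1 : setProb θ A ≤ (A.card : ℝ) * Real.exp (-(n : ℝ) * H + n * ε) := by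
      rw [setProb]
      calc ∑ x ∈ A, strProb θ x
          ≤ ∑ _x ∈ A, Real.exp (-(n : ℝ) * H + n * ε) := by
            apply Finset.sum_le_sum
            intro x hx
            rw [hA] at hx
            exact le_of_lt (Finset.mem_filter.mp hx).2.2
        _ = (A.card : ℝ) * Real.exp (-(n : ℝ) * H + n * ε) := by
            rw [Finset.sum_const, nsmul_eq_mul]
    have hprod : Real.exp (-(n : ℝ) * H + n * ε) * Real.exp ((n : ℝ) * H - n * ε) = 1 := by
      rw [← Real.exp_add, show (-(n : ℝ) * H + n * ε) + ((n : ℝ) * H - n * ε) = 0 by ring,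
        Real.exp_zero]
    calc (1 - V / (n * ε ^ 2)) * Real.exp ((n : ℝ) * H - n * ε)
        ≤ setProb θ A * Real.exp ((n : ℝ) * H - n * ε) :=
          mul_le_mul_of_nonneg_right part1 (Real.exp_pos _).le
      _ ≤ ((A.card : ℝ) * Real.exp (-(n : ℝ) * H + n * ε)) * Real.exp ((n : ℝ) * H - n * ε) :=
          mul_le_mul_of_nonneg_right hcard1 (Real.exp_pos _).le
      _ = (A.card : ℝ) := by rw [mul_assoc, hprod, mul_one]
  · -- cardinality upper bound
    rcases Finset.eq_empty_or_nonempty A with hAe | hAne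
    · rw [hAe]
      simpa using Real.exp_pos _
    · have hlt : (A.card : ℝ) * Real.exp (-(n : ℝ) * H - n * ε) < setProb θ A := by
        rw [setProb]
        calc (A.card : ℝ) * Real.exp (-(n : ℝ) * H - n * ε)
            = ∑ _x ∈ A, Real.exp (-(n : ℝ) * H - n * ε) := by
              rw [Finset.sum_const, nsmul_eq_mul]
          _ < ∑ x ∈ A, strProb θ x := by
              apply Finset.sum_lt_sum_of_nonempty hAne
              intro x hx
              rw [hA] at hx
              exact (Finset.mem_filter.mp hx).2.1
      have hle1 : setProb θ A ≤ 1 := by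
        rw [setProb, ← htot]
        apply Finset.sum_le_sum_of_subset_of_nonneg (Finset.subset_univ A)
        intro x _ _
        exact (hPpos x).le
      have hprod : Real.exp (-(n : ℝ) * H - n * ε) * Real.exp ((n : ℝ) * H + n * ε) = 1 := by
        rw [← Real.exp_add, show (-(n : ℝ) * H - n * ε) + ((n : ℝ) * H + n * ε) = 0 by ring,
          Real.exp_zero]
      nlinarith [Real.exp_pos ((n : ℝ) * H + n * ε), Real.exp_pos (-(n : ℝ) * H - n * ε)]
end

section
/- Let θ be a categorical distribution on a finite nonempty set X, let n ≥ 1, ε > 0 and α > 0, and let G be a guesswork function for θ on Xⁿ. Then for every xⁿ ∈ Xⁿ: (i) if xⁿ ∈ D^n_{θ,α,ε} then G(xⁿ) ≤ exp(n·H(T(θ,α)) + α·n·ε); (ii) if G(xⁿ) ≤ (1 − V(T(θ,α)||θ)/(n·ε²))·exp(n·H(T(θ,α)) − α·n·ε) then xⁿ ∈ D^n_{θ,α,ε}; and (iii) if G(xⁿ) > exp(n·H(T(θ,α)) + α·n·ε) then xⁿ ∈ E^n_{θ,α,ε}. -/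
open Real BigOperators
open scoped Classical

variable {X : Type*}

section AuxLemmas

variable [Fintype X]

lemma sum_prod_pi (n : ℕ) (ψ : Fin n → X → ℝ) :
    ∑ x : Fin n → X, ∏ i, ψ i (x i) = ∏ i, ∑ a, ψ i a := by
  rw [Finset.prod_univ_sum, Fintype.piFinset_univ]

lemma pair_moment (n : ℕ) (ρ g : X → ℝ) (h1 : ∑ a, ρ a = 1)
    (h0 : ∑ a, ρ a * g a = 0) (i j : Fin n) :
    ∑ x : Fin n → X, (∏ k, ρ (x k)) * (g (x i) * g (x j)) =
      if i = j then ∑ a, ρ a * g a ^ 2 else 0 := by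
  have key : ∀ x : Fin n → X, (∏ k, ρ (x k)) * (g (x i) * g (x j)) =
      ∏ k, (ρ (x k) * ((if k = i then g (x k) else 1) * (if k = j then g (x k) else 1))) := by
    intro x
    rw [Finset.prod_mul_distrib, Finset.prod_mul_distrib,
      Finset.prod_ite_eq' Finset.univ i (fun k => g (x k)),
      Finset.prod_ite_eq' Finset.univ j (fun k => g (x k))]
    simp
  simp_rw [key]
  rw [sum_prod_pi n (fun k a => ρ a * ((if k = i then g a else 1) * (if k = j then g a else 1)))]
  by_cases hij : i = j
  · subst hij
    simp only [if_pos rfl]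
    rw [Finset.prod_eq_single i]
    · refine Finset.sum_congr rfl fun a _ => ?_
      simp [sq]
    · intro k _ hk
      simp only [if_neg hk]
      simpa using h1
    · simp
  · rw [if_neg hij]
    apply Finset.prod_eq_zero (Finset.mem_univ i)
    simp only [if_pos rfl, if_neg hij]
    simpa using h0

lemma iid_var (n : ℕ) (ρ g : X → ℝ) (h1 : ∑ a, ρ a = 1)
    (h0 : ∑ a, ρ a * g a = 0) :
    ∑ x : Fin n → X, (∏ k, ρ (x k)) * (∑ i, g (x i)) ^ 2
      = n * ∑ a, ρ a * g a ^ 2 := by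
  have expand : ∀ x : Fin n → X, (∑ i, g (x i)) ^ 2 = ∑ i : Fin n, ∑ j : Fin n, g (x i) * g (x j) := by
    intro x; rw [sq, Finset.sum_mul_sum]
  calc ∑ x : Fin n → X, (∏ k, ρ (x k)) * (∑ i, g (x i)) ^ 2
      = ∑ x : Fin n → X, ∑ i : Fin n, ∑ j : Fin n, (∏ k, ρ (x k)) * (g (x i) * g (x j)) := by
        refine Finset.sum_congr rfl fun x _ => ?_
        rw [expand, Finset.mul_sum]
        refine Finset.sum_congr rfl fun i _ => ?_
        rw [Finset.mul_sum]
    _ = ∑ i : Fin n, ∑ j : Fin n, ∑ x : Fin n → X, (∏ k, ρ (x k)) * (g (x i) * g (x j)) := by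
        rw [Finset.sum_comm]
        refine Finset.sum_congr rfl fun i _ => ?_
        rw [Finset.sum_comm]
    _ = ∑ i : Fin n, ∑ j : Fin n, if i = j then ∑ a, ρ a * g a ^ 2 else 0 := by
        refine Finset.sum_congr rfl fun i _ => Finset.sum_congr rfl fun j _ => ?_
        exact pair_moment n ρ g h1 h0 i j
    _ = ∑ _i : Fin n, ∑ a, ρ a * g a ^ 2 := by
        refine Finset.sum_congr rfl fun i _ => ?_
        simp
    _ = n * ∑ a, ρ a * g a ^ 2 := by
        rw [Finset.sum_const, Finset.card_univ, Fintype.card_fin, nsmul_eq_mul]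

end AuxLemmas

theorem guesswork_typical_bounds [Fintype X] [Nonempty X] (θ : X → ℝ)
    (hθ : IsCatDist θ) (n : ℕ) (hn : 1 ≤ n) (ε : ℝ) (hε : 0 < ε)
    (α : ℝ) (hα : 0 < α) (G : (Fin n → X) → ℕ) (hG : IsGuesswork θ G) :
    ∀ x : Fin n → X,
      (x ∈ setD θ α n ε →
        (G x : ℝ) ≤ Real.exp ((n : ℝ) * shannonEntropy (tilt θ α) + α * n * ε)) ∧
      ((G x : ℝ) ≤ (1 - crossVarentropy (tilt θ α) θ / (n * ε ^ 2)) *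
          Real.exp ((n : ℝ) * shannonEntropy (tilt θ α) - α * n * ε) →
        x ∈ setD θ α n ε) ∧
      ((G x : ℝ) > Real.exp ((n : ℝ) * shannonEntropy (tilt θ α) + α * n * ε) →
        x ∈ setE θ α n ε) := by
  classical
  obtain ⟨hθpos, hθsum⟩ := hθ
  obtain ⟨hGinj, hGmem, hGsurj, hGord⟩ := hG
  set Z : ℝ := ∑ y, θ y ^ α with hZdef
  have hZ : 0 < Z :=
    Finset.sum_pos (fun y _ => Real.rpow_pos_of_pos (hθpos y) α) Finset.univ_nonempty
  set ρ : X → ℝ := tilt θ α with hρdef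
  have hρeq : ∀ a, ρ a = θ a ^ α / Z := fun a => rfl
  have hρpos : ∀ a, 0 < ρ a := fun a => div_pos (Real.rpow_pos_of_pos (hθpos a) α) hZ
  have hρsum : ∑ a, ρ a = 1 := by
    simp_rw [hρeq]
    rw [← Finset.sum_div, div_self hZ.ne']
  have hsρpos : ∀ x : Fin n → X, 0 < strProb ρ x := fun x =>
    Finset.prod_pos fun i _ => hρpos (x i)
  have hsθpos : ∀ x : Fin n → X, 0 < strProb θ x := fun x =>
    Finset.prod_pos fun i _ => hθpos (x i)
  have hstr : ∀ x : Fin n → X, strProb ρ x = strProb θ x ^ α / Z ^ n := by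
    intro x
    unfold strProb
    simp_rw [hρeq]
    rw [Finset.prod_div_distrib, Finset.prod_const, Finset.card_univ, Fintype.card_fin,
      Real.finset_prod_rpow _ _ (fun i _ => (hθpos (x i)).le)]
  have hmono_le : ∀ x y : Fin n → X, strProb θ x ≤ strProb θ y → strProb ρ x ≤ strProb ρ y := by
    intro x y h
    rw [hstr, hstr]
    have := Real.rpow_le_rpow (hsθpos x).le h hα.le
    gcongr
  have hmono_lt : ∀ x y : Fin n → X, strProb ρ x < strProb ρ y → strProb θ x < strProb θ y := by
    intro x y h
    by_contra hc
    exact absurd (hmono_le y x (not_lt.1 hc)) (not_le.2 h)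
  have hGle : ∀ x y : Fin n → X, G y ≤ G x → strProb ρ x ≤ strProb ρ y := by
    intro x y h
    refine hmono_le x y ?_
    by_contra hc
    exact absurd (hGord x y (not_le.1 hc)) (not_lt.2 h)
  have htotal : ∑ x : Fin n → X, strProb ρ x = 1 := by
    have h := sum_prod_pi (X := X) n (fun _ a => ρ a)
    simp only [hρsum, Finset.prod_const_one] at h
    exact h
  have hsub1 : ∀ S : Finset (Fin n → X), ∑ y ∈ S, strProb ρ y ≤ 1 := by
    intro S
    rw [← htotal]
    exact Finset.sum_le_sum_of_subset_of_nonneg (Finset.subset_univ S)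
      (fun y _ _ => (hsρpos y).le)
  set H : ℝ := shannonEntropy ρ with hHdef
  set Hc : ℝ := crossEntropy ρ θ with hHcdef
  set g : X → ℝ := fun a => Real.log (1 / ρ a) - H with hgdef
  have hlogρ : ∀ a, Real.log (1 / ρ a) = α * Real.log (1 / θ a) + Real.log Z := by
    intro a
    rw [one_div, Real.log_inv, hρeq a,
      Real.log_div (Real.rpow_pos_of_pos (hθpos a) α).ne' hZ.ne',
      Real.log_rpow (hθpos a), one_div, Real.log_inv]
    ring
  have hH : H = α * Hc + Real.log Z := by
    rw [hHdef, hHcdef]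
    unfold shannonEntropy crossEntropy
    calc ∑ a, ρ a * Real.log (1 / ρ a)
        = ∑ a, (α * (ρ a * Real.log (1 / θ a)) + Real.log Z * ρ a) := by
          refine Finset.sum_congr rfl fun a _ => ?_
          rw [hlogρ a]; ring
      _ = α * ∑ a, ρ a * Real.log (1 / θ a) + Real.log Z := by
          rw [Finset.sum_add_distrib, ← Finset.mul_sum, ← Finset.mul_sum, hρsum, mul_one]
  have hgα : ∀ a, g a = α * (Real.log (1 / θ a) - Hc) := by
    intro a
    show Real.log (1 / ρ a) - H = α * (Real.log (1 / θ a) - Hc)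
    rw [hlogρ a, hH]; ring
  have hg0 : ∑ a, ρ a * g a = 0 := by
    calc ∑ a, ρ a * g a = ∑ a, (ρ a * Real.log (1 / ρ a) - H * ρ a) := by
          refine Finset.sum_congr rfl fun a _ => ?_
          show ρ a * (Real.log (1 / ρ a) - H) = _
          ring
      _ = 0 := by
          rw [Finset.sum_sub_distrib, ← Finset.mul_sum, hρsum, mul_one]
          have : ∑ a, ρ a * Real.log (1 / ρ a) = H := by rw [hHdef]; rfl
          rw [this, sub_self]
  have hlogstr : ∀ x : Fin n → X, Real.log (strProb ρ x) = -(∑ i, g (x i)) - n * H := by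
    intro x
    have h1 : Real.log (strProb ρ x) = ∑ i, Real.log (ρ (x i)) :=
      Real.log_prod (fun i _ => (hρpos (x i)).ne')
    have h2 : ∀ i : Fin n, Real.log (ρ (x i)) = -(g (x i)) - H := by
      intro i
      show Real.log (ρ (x i)) = -(Real.log (1 / ρ (x i)) - H) - H
      rw [one_div, Real.log_inv]; ring
    rw [h1, Finset.sum_congr rfl (fun i _ => h2 i), Finset.sum_sub_distrib,
      Finset.sum_neg_distrib, Finset.sum_const, Finset.card_univ, Fintype.card_fin,
      nsmul_eq_mul]
  have hα' : |α| = α := abs_of_pos hα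
  have hnpos : (0:ℝ) < n := by exact_mod_cast Nat.lt_of_lt_of_le Nat.zero_lt_one hn
  set t : ℝ := (n : ℝ) * α * ε with htdef
  have ht : 0 < t := mul_pos (mul_pos hnpos hα) hε
  have hDmem' : ∀ y : Fin n → X,
      y ∈ setD θ α n ε ↔ Real.exp (-(n:ℝ) * H - t) < strProb ρ y := by
    intro y
    rw [setD, Finset.mem_filter]
    simp only [Finset.mem_univ, true_and, gt_iff_lt]
    rw [← hρdef, ← hHdef, hα', ← htdef]
  have hEmem' : ∀ y : Fin n → X,
      y ∈ setE θ α n ε ↔ strProb ρ y < Real.exp (-(n:ℝ) * H + t) := by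
    intro y
    rw [setE, Finset.mem_filter]
    simp only [Finset.mem_univ, true_and]
    rw [← hρdef, ← hHdef, hα', ← htdef]
  have hDg : ∀ y : Fin n → X,
      Real.exp (-(n:ℝ) * H - t) < strProb ρ y ↔ (∑ i, g (y i)) < t := by
    intro y
    rw [← Real.lt_log_iff_exp_lt (hsρpos y), hlogstr y]
    constructor <;> intro h <;> linarith
  have hEg : ∀ y : Fin n → X,
      strProb ρ y < Real.exp (-(n:ℝ) * H + t) ↔ -t < (∑ i, g (y i)) := by
    intro y
    rw [← Real.log_lt_iff_lt_exp (hsρpos y), hlogstr y]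
    constructor <;> intro h <;> linarith
  set Vg : ℝ := ∑ a, ρ a * g a ^ 2 with hVgdef
  have hvar : ∑ x : Fin n → X, strProb ρ x * (∑ i, g (x i)) ^ 2 = n * Vg :=
    iid_var n ρ g hρsum hg0
  set T : Finset (Fin n → X) := setD θ α n ε ∩ setE θ α n ε with hTdef
  have hTprob : 1 - (n : ℝ) * Vg / t ^ 2 ≤ ∑ y ∈ T, strProb ρ y := by
    have hsplit : ∑ y ∈ T, strProb ρ y + ∑ y ∈ Finset.univ \ T, strProb ρ y = 1 := by
      rw [add_comm, Finset.sum_sdiff (Finset.subset_univ T), htotal]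
    have hbound : ∑ y ∈ Finset.univ \ T, strProb ρ y ≤ (n : ℝ) * Vg / t ^ 2 := by
      rw [le_div_iff₀ (pow_pos ht 2)]
      calc (∑ y ∈ Finset.univ \ T, strProb ρ y) * t ^ 2
          = ∑ y ∈ Finset.univ \ T, strProb ρ y * t ^ 2 := Finset.sum_mul _ _ _
        _ ≤ ∑ y ∈ Finset.univ \ T, strProb ρ y * (∑ i, g (y i)) ^ 2 := by
            refine Finset.sum_le_sum fun y hy => ?_
            have hy' : y ∉ T := (Finset.mem_sdiff.1 hy).2
            have habs : t ≤ |∑ i, g (y i)| := by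
              rcases Decidable.not_and_iff_or_not.1
                (fun h : y ∈ setD θ α n ε ∧ y ∈ setE θ α n ε =>
                  hy' (Finset.mem_inter.2 h)) with h | h
              · rw [hDmem', hDg] at h
                push_neg at h
                exact h.trans (le_abs_self _)
              · rw [hEmem', hEg] at h
                push_neg at h
                exact le_abs.2 (Or.inr (by linarith))
            have h2 : t ^ 2 ≤ (∑ i, g (y i)) ^ 2 := by
              calc t ^ 2 ≤ |∑ i, g (y i)| ^ 2 := pow_le_pow_left₀ ht.le habs 2
                _ = (∑ i, g (y i)) ^ 2 := sq_abs _
            exact mul_le_mul_of_nonneg_left h2 (hsρpos y).le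
        _ ≤ ∑ y : Fin n → X, strProb ρ y * (∑ i, g (y i)) ^ 2 :=
            Finset.sum_le_sum_of_subset_of_nonneg (Finset.subset_univ _)
              (fun y _ _ => mul_nonneg (hsρpos y).le (sq_nonneg _))
        _ = (n : ℝ) * Vg := hvar
    linarith
  have hVg : Vg = α ^ 2 * crossVarentropy ρ θ := by
    rw [hVgdef]
    unfold crossVarentropy
    rw [← hHcdef, Finset.mul_sum]
    refine Finset.sum_congr rfl fun a _ => ?_
    rw [hgα a]; ring
  have hδ : (n : ℝ) * Vg / t ^ 2 = crossVarentropy ρ θ / ((n : ℝ) * ε ^ 2) := by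
    rw [hVg, htdef]
    field_simp
  have hcountA : ∀ x : Fin n → X,
      (G x : ℝ) ≤ ((Finset.univ.filter (fun y => G y ≤ G x)).card : ℝ) := by
    intro x
    have hsub : Finset.Icc 1 (G x) ⊆ (Finset.univ.filter (fun y => G y ≤ G x)).image G := by
      intro m hm
      obtain ⟨hm1, hm2⟩ := Finset.mem_Icc.1 hm
      obtain ⟨y, hy⟩ := hGsurj m (Finset.mem_Icc.2 ⟨hm1, hm2.trans (Finset.mem_Icc.1 (hGmem x)).2⟩)
      exact Finset.mem_image.2 ⟨y, Finset.mem_filter.2 ⟨Finset.mem_univ y, by rw [hy]; exact hm2⟩, hy⟩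
    have h1 : G x ≤ ((Finset.univ.filter fun y => G y ≤ G x).image G).card := by
      have h := Finset.card_le_card hsub
      rwa [Nat.card_Icc, Nat.add_sub_cancel] at h
    have h2 := Finset.card_image_le (s := Finset.univ.filter fun y => G y ≤ G x) (f := G)
    exact_mod_cast h1.trans h2
  have hcountB : ∀ (x : Fin n → X) (S : Finset (Fin n → X)),
      (∀ y ∈ S, G y < G x) → (S.card : ℝ) ≤ (G x : ℝ) - 1 := by
    intro x S hS
    have himg : S.image G ⊆ Finset.Icc 1 (G x - 1) := by
      intro m hm
      obtain ⟨y, hy, rfl⟩ := Finset.mem_image.1 hm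
      exact Finset.mem_Icc.2 ⟨(Finset.mem_Icc.1 (hGmem y)).1, Nat.le_sub_one_of_lt (hS y hy)⟩
    have h1 : S.card ≤ G x - 1 := by
      have h := Finset.card_le_card himg
      rwa [Finset.card_image_of_injective S hGinj, Nat.card_Icc, Nat.add_sub_cancel] at h
    have hx1 : 1 ≤ G x := (Finset.mem_Icc.1 (hGmem x)).1
    calc (S.card : ℝ) ≤ ((G x - 1 : ℕ) : ℝ) := by exact_mod_cast h1
      _ = (G x : ℝ) - 1 := by rw [Nat.cast_sub hx1, Nat.cast_one]
  intro x
  refine ⟨?_, ?_, ?_⟩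
  · -- Part (i)
    intro hxD
    have hxs := (hDmem' x).1 hxD
    set S := Finset.univ.filter (fun y => G y ≤ G x) with hSdef
    have hlow : ∀ y ∈ S, Real.exp (-(n:ℝ) * H - t) ≤ strProb ρ y := by
      intro y hy
      have := hGle x y (Finset.mem_filter.1 hy).2
      linarith
    have hsum : (S.card : ℝ) * Real.exp (-(n:ℝ) * H - t) ≤ 1 := by
      calc (S.card : ℝ) * Real.exp (-(n:ℝ) * H - t) ≤ ∑ y ∈ S, strProb ρ y := by
            rw [← nsmul_eq_mul]
            exact Finset.card_nsmul_le_sum S _ _ hlow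
        _ ≤ 1 := hsub1 S
    have hGxle : (G x : ℝ) * Real.exp (-(n:ℝ) * H - t) ≤ 1 :=
      le_trans (mul_le_mul_of_nonneg_right (hcountA x) (Real.exp_pos _).le) hsum
    have hgoal : (n:ℝ) * H + α * ↑n * ε = (n:ℝ) * H + t := by rw [htdef]; ring
    rw [hgoal]
    calc (G x : ℝ)
        = (G x : ℝ) * Real.exp (-(n:ℝ) * H - t) * Real.exp ((n:ℝ) * H + t) := by
          rw [mul_assoc, ← Real.exp_add,
            show (-(n:ℝ) * H - t) + ((n:ℝ) * H + t) = 0 by ring, Real.exp_zero, mul_one]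
      _ ≤ 1 * Real.exp ((n:ℝ) * H + t) :=
          mul_le_mul_of_nonneg_right hGxle (Real.exp_pos _).le
      _ = Real.exp ((n:ℝ) * H + t) := one_mul _
  · -- Part (ii)
    intro hle
    by_contra hxD
    have hxs : strProb ρ x ≤ Real.exp (-(n:ℝ) * H - t) :=
      not_lt.1 (fun h => hxD ((hDmem' x).2 h))
    have hTsub : ∀ y ∈ T, G y < G x := by
      intro y hy
      have hyD := (Finset.mem_inter.1 hy).1
      have hρy := (hDmem' y).1 hyD
      exact hGord y x (hmono_lt x y (lt_of_le_of_lt hxs hρy))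
    have hcard := hcountB x T hTsub
    have hup : ∀ y ∈ T, strProb ρ y ≤ Real.exp (-(n:ℝ) * H + t) := fun y hy =>
      ((hEmem' y).1 (Finset.mem_inter.1 hy).2).le
    have hTcard : 1 - (n : ℝ) * Vg / t ^ 2 ≤ (T.card : ℝ) * Real.exp (-(n:ℝ) * H + t) := by
      calc 1 - (n : ℝ) * Vg / t ^ 2 ≤ ∑ y ∈ T, strProb ρ y := hTprob
        _ ≤ (T.card : ℝ) * Real.exp (-(n:ℝ) * H + t) := by
            rw [← nsmul_eq_mul]
            exact Finset.sum_le_card_nsmul T _ _ hup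
    have hexp2 : Real.exp (-(n:ℝ) * H + t) * Real.exp ((n:ℝ) * H - t) = 1 := by
      rw [← Real.exp_add, show (-(n:ℝ) * H + t) + ((n:ℝ) * H - t) = 0 by ring, Real.exp_zero]
    have hGx : (G x : ℝ) ≤ (T.card : ℝ) := by
      have hgoalexp : (n:ℝ) * H - α * ↑n * ε = (n:ℝ) * H - t := by rw [htdef]; ring
      calc (G x : ℝ)
          ≤ (1 - crossVarentropy ρ θ / ((n:ℝ) * ε ^ 2)) * Real.exp ((n:ℝ) * H - t) := by
            rw [← hgoalexp]; exact hle
        _ = (1 - (n : ℝ) * Vg / t ^ 2) * Real.exp ((n:ℝ) * H - t) := by rw [hδ]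
        _ ≤ ((T.card : ℝ) * Real.exp (-(n:ℝ) * H + t)) * Real.exp ((n:ℝ) * H - t) :=
            mul_le_mul_of_nonneg_right hTcard (Real.exp_pos _).le
        _ = (T.card : ℝ) := by rw [mul_assoc, hexp2, mul_one]
    have hx1 : (1:ℝ) ≤ (G x : ℝ) := by
      exact_mod_cast (Finset.mem_Icc.1 (hGmem x)).1
    linarith
  · -- Part (iii)
    intro hgt
    by_contra hxE
    have hxs : Real.exp (-(n:ℝ) * H + t) ≤ strProb ρ x :=
      not_lt.1 (fun h => hxE ((hEmem' x).2 h))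
    set S := Finset.univ.filter (fun y => G y ≤ G x) with hSdef
    have hlow : ∀ y ∈ S, Real.exp (-(n:ℝ) * H + t) ≤ strProb ρ y := by
      intro y hy
      exact le_trans hxs (hGle x y (Finset.mem_filter.1 hy).2)
    have hsum : (S.card : ℝ) * Real.exp (-(n:ℝ) * H + t) ≤ 1 := by
      calc (S.card : ℝ) * Real.exp (-(n:ℝ) * H + t) ≤ ∑ y ∈ S, strProb ρ y := by
            rw [← nsmul_eq_mul]
            exact Finset.card_nsmul_le_sum S _ _ hlow
        _ ≤ 1 := hsub1 S
    have hGxle : (G x : ℝ) * Real.exp (-(n:ℝ) * H + t) ≤ 1 :=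
      le_trans (mul_le_mul_of_nonneg_right (hcountA x) (Real.exp_pos _).le) hsum
    have hgt' : Real.exp ((n:ℝ) * H + t) < (G x : ℝ) := by
      have hgoal : (n:ℝ) * H + α * ↑n * ε = (n:ℝ) * H + t := by rw [htdef]; ring
      rw [← hgoal]; exact hgt
    have h2 : Real.exp ((n:ℝ) * H + t) * Real.exp (-(n:ℝ) * H + t) <
        (G x : ℝ) * Real.exp (-(n:ℝ) * H + t) :=
      mul_lt_mul_of_pos_right hgt' (Real.exp_pos _)
    have h3 : Real.exp ((n:ℝ) * H + t) * Real.exp (-(n:ℝ) * H + t) = Real.exp (2 * t) := by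
      rw [← Real.exp_add]; ring_nf
    have h4 : (1:ℝ) < Real.exp (2 * t) := by
      rw [← Real.exp_zero]
      exact Real.exp_lt_exp.2 (by linarith)
    linarith
end
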